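/- Let G be a δ-regular graph on n vertices with adjacency matrix A and eigenvalues λ₁ = δ ≥ λ₂ ≥ ⋯ ≥ λₙ. Let p be a real polynomial of degree at most k, W(p) = max_u (p(A))_{uu}, and λ(p) = min_{2 ≤ i ≤ n} p(λᵢ). If p(λ₁) > λ(p), then α_k(G) ≤ n · (W(p) − λ(p)) / (p(λ₁) − λ(p)). -/
import Mathlib


open Polynomial Matrix Finset
open scoped Classical

/-- The `k`-independence number: maximum size of a set of vertices pairwise at
distance greater than `k` (every walk between distinct members has length `> k`). -/
noncomputable def kIndepNum {n : ℕ} (G : SimpleGraph (Fin n)) (k : ℕ) : ℕ :=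
  sSup {m | ∃ s : Finset (Fin n),
    (∀ u ∈ s, ∀ v ∈ s, u ≠ v → ∀ w : G.Walk u v, k < w.length) ∧ s.card = m}


lemma aux_pow_mulVec {n : ℕ} (A : Matrix (Fin n) (Fin n) ℝ) (v : Fin n → ℝ) (t : ℝ)
    (h : A *ᵥ v = t • v) (i : ℕ) : A ^ i *ᵥ v = t ^ i • v := by
  induction i with
  | zero => simp
  | succ i ih =>
    rw [pow_succ, ← Matrix.mulVec_mulVec, h, Matrix.mulVec_smul, ih, smul_smul, pow_succ]
    ring_nf

lemma aux_sum_mulVec {n : ℕ} {ι : Type*} (s : Finset ι) (M : ι → Matrix (Fin n) (Fin n) ℝ)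
    (v : Fin n → ℝ) : (∑ i ∈ s, M i) *ᵥ v = ∑ i ∈ s, M i *ᵥ v := by
  ext u
  simp only [Matrix.mulVec, dotProduct, Matrix.sum_apply, Finset.sum_mul,
    Finset.sum_apply]
  exact Finset.sum_comm

lemma aux_aeval_mulVec {n : ℕ} (A : Matrix (Fin n) (Fin n) ℝ) (v : Fin n → ℝ) (t : ℝ)
    (h : A *ᵥ v = t • v) (p : Polynomial ℝ) :
    (Polynomial.aeval A p) *ᵥ v = p.eval t • v := by
  rw [Polynomial.aeval_eq_sum_range, Polynomial.eval_eq_sum_range, aux_sum_mulVec]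
  simp only [Matrix.smul_mulVec, aux_pow_mulVec A v t h]
  rw [Finset.sum_smul]
  simp [smul_smul]

lemma aux_aeval_transpose {n : ℕ} (A : Matrix (Fin n) (Fin n) ℝ) (h : Aᵀ = A)
    (p : Polynomial ℝ) : (Polynomial.aeval A p)ᵀ = Polynomial.aeval A p := by
  rw [Polynomial.aeval_eq_sum_range]
  rw [Matrix.transpose_sum]
  refine Finset.sum_congr rfl fun i _ => ?_
  rw [Matrix.transpose_smul, Matrix.transpose_pow, h]

lemma aux_mulVec_eq_sum {n : ℕ} {A : Matrix (Fin n) (Fin n) ℝ} (hA : A.IsHermitian)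
    (w : Fin n → ℝ) :
    (hA.eigenvectorUnitary : Matrix (Fin n) (Fin n) ℝ) *ᵥ w
      = ∑ j, w j • (⇑(hA.eigenvectorBasis j) : Fin n → ℝ) := by
  ext u
  simp only [Matrix.mulVec, dotProduct, Finset.sum_apply, Pi.smul_apply, smul_eq_mul,
    Matrix.IsHermitian.eigenvectorUnitary_apply]
  exact Finset.sum_congr rfl fun j _ => mul_comm _ _

lemma aux_starV_apply {n : ℕ} {A : Matrix (Fin n) (Fin n) ℝ} (hA : A.IsHermitian)
    (x : Fin n → ℝ) (j : Fin n) :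
    ((star (hA.eigenvectorUnitary : Matrix (Fin n) (Fin n) ℝ)) *ᵥ x) j
      = (⇑(hA.eigenvectorBasis j) : Fin n → ℝ) ⬝ᵥ x := by
  simp only [Matrix.mulVec, dotProduct, Matrix.star_apply, star_trivial,
    Matrix.IsHermitian.eigenvectorUnitary_apply]

lemma aux_recon {n : ℕ} {A : Matrix (Fin n) (Fin n) ℝ} (hA : A.IsHermitian)
    (x : Fin n → ℝ) :
    (hA.eigenvectorUnitary : Matrix (Fin n) (Fin n) ℝ) *ᵥ
      ((star (hA.eigenvectorUnitary : Matrix (Fin n) (Fin n) ℝ)) *ᵥ x) = x := by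
  rw [Matrix.mulVec_mulVec, Matrix.mem_unitaryGroup_iff.mp hA.eigenvectorUnitary.2,
    Matrix.one_mulVec]

lemma aux_dotProduct_sum {n : ℕ} {ι : Type*} (s : Finset ι) (a : Fin n → ℝ)
    (f : ι → Fin n → ℝ) : a ⬝ᵥ (∑ j ∈ s, f j) = ∑ j ∈ s, a ⬝ᵥ f j := by
  simp only [dotProduct, Finset.sum_apply, Finset.mul_sum]
  exact Finset.sum_comm

lemma aux_dot_expand {n : ℕ} {A : Matrix (Fin n) (Fin n) ℝ} (hA : A.IsHermitian)
    (a x : Fin n → ℝ) :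
    a ⬝ᵥ x = ∑ j, ((⇑(hA.eigenvectorBasis j) : Fin n → ℝ) ⬝ᵥ a)
      * ((⇑(hA.eigenvectorBasis j) : Fin n → ℝ) ⬝ᵥ x) := by
  conv_lhs => rw [← aux_recon hA x, aux_mulVec_eq_sum hA]
  rw [aux_dotProduct_sum]
  exact Finset.sum_congr rfl fun j _ => by
    rw [dotProduct_smul, aux_starV_apply hA x j, smul_eq_mul,
      dotProduct_comm a]
    ring

lemma aux_quad {n : ℕ} {A : Matrix (Fin n) (Fin n) ℝ} (hA : A.IsHermitian)
    (p : Polynomial ℝ) (x : Fin n → ℝ) :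
    x ⬝ᵥ ((Polynomial.aeval A p) *ᵥ x)
      = ∑ j, p.eval (hA.eigenvalues j) * ((⇑(hA.eigenvectorBasis j) : Fin n → ℝ) ⬝ᵥ x) ^ 2 := by
  have hMx : (Polynomial.aeval A p) *ᵥ x
      = ∑ j, (p.eval (hA.eigenvalues j) * ((⇑(hA.eigenvectorBasis j) : Fin n → ℝ) ⬝ᵥ x))
          • (⇑(hA.eigenvectorBasis j) : Fin n → ℝ) := by
    conv_lhs => rw [← aux_recon hA x, aux_mulVec_eq_sum hA]
    rw [← Matrix.mulVecLin_apply, map_sum]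
    refine Finset.sum_congr rfl fun j _ => ?_
    rw [_root_.map_smul, Matrix.mulVecLin_apply,
      aux_aeval_mulVec A _ _ (hA.mulVec_eigenvectorBasis j) p, aux_starV_apply hA x j,
      smul_smul, mul_comm]
  rw [hMx, aux_dotProduct_sum]
  refine Finset.sum_congr rfl fun j _ => ?_
  rw [dotProduct_smul, smul_eq_mul, dotProduct_comm]
  ring

lemma aux_spec {n : ℕ} (hn : 0 < n) {A : Matrix (Fin n) (Fin n) ℝ} (hA : A.IsHermitian)
    (d : ℝ) (hA1 : A *ᵥ (fun _ => (1:ℝ)) = d • (fun _ => (1:ℝ)))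
    (eig : Fin n → ℝ) (hperm : ∃ σ : Equiv.Perm (Fin n), eig = hA.eigenvalues ∘ σ)
    (heig0 : eig ⟨0, hn⟩ = d)
    (p : Polynomial ℝ) (lam : ℝ)
    (hlam : ∀ i : Fin n, (i : ℕ) ≠ 0 → lam ≤ p.eval (eig i))
    (z : Fin n → ℝ) (hz : (fun _ => (1:ℝ)) ⬝ᵥ z = 0) :
    lam * (z ⬝ᵥ z) ≤ z ⬝ᵥ ((Polynomial.aeval A p) *ᵥ z) := by
  obtain ⟨σ, hσ⟩ := hperm
  have hAT : Aᵀ = A := by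
    ext i j
    have h := congrFun (congrFun hA i) j
    simpa [Matrix.conjTranspose_apply] using h
  set μ : Fin n → ℝ := hA.eigenvalues with hμ
  set v : Fin n → Fin n → ℝ := fun j => ⇑(hA.eigenvectorBasis j) with hv
  set ones : Fin n → ℝ := fun _ => (1:ℝ) with hones
  have heigenv : ∀ j : Fin n, μ j * (v j ⬝ᵥ ones) = d * (v j ⬝ᵥ ones) := by
    intro j
    have h1 : v j ⬝ᵥ (A *ᵥ ones) = d * (v j ⬝ᵥ ones) := by
      rw [hA1, dotProduct_smul, smul_eq_mul]
    have h2 : v j ⬝ᵥ (A *ᵥ ones) = μ j * (v j ⬝ᵥ ones) := by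
      rw [Matrix.dotProduct_mulVec, ← (Matrix.mulVec_transpose A (v j)), hAT,
        hA.mulVec_eigenvectorBasis, smul_dotProduct, smul_eq_mul]
    rw [← h1, h2]
  -- key pointwise inequality
  have hkey : ∀ j : Fin n, lam * ((v j ⬝ᵥ z) * (v j ⬝ᵥ z)) ≤ p.eval (μ j) * (v j ⬝ᵥ z) ^ 2 := by
    intro j
    rcases em (∃ i : Fin n, (i : ℕ) ≠ 0 ∧ eig i = μ j) with ⟨i, hi0, hie⟩ | hc
    · have : lam ≤ p.eval (μ j) := hie ▸ hlam i hi0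
      nlinarith [sq_nonneg (v j ⬝ᵥ z)]
    · push_neg at hc
      have heq : ∀ i : Fin n, eig i = μ (σ i) := fun i => congrFun hσ i
      have hj0 : σ.symm j = ⟨0, hn⟩ := by
        by_contra hne
        have h0 : ((σ.symm j : Fin n) : ℕ) ≠ 0 := by
          intro h
          exact hne (Fin.ext h)
        exact hc (σ.symm j) h0 (by rw [heq, Equiv.apply_symm_apply])
      have hμj : μ j = d := by
        rw [← heig0, ← hj0, heq, Equiv.apply_symm_apply]
      have huniq : ∀ j' : Fin n, j' ≠ j → μ j' ≠ d := by
        intro j' hne hd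
        have h0 : ((σ.symm j' : Fin n) : ℕ) ≠ 0 := by
          intro h
          exact hne (by
            have : σ.symm j' = σ.symm j := by rw [hj0]; exact Fin.ext h
            exact σ.symm.injective this)
        exact hc (σ.symm j') h0 (by rw [heq, Equiv.apply_symm_apply, hd, ← hμj])
      have hez : ∀ j' : Fin n, j' ≠ j → v j' ⬝ᵥ ones = 0 := by
        intro j' hne
        have h2 : (μ j' - d) * (v j' ⬝ᵥ ones) = 0 := by
          linear_combination heigenv j'
        rcases mul_eq_zero.mp h2 with h | h
        · exact absurd (by linarith : μ j' = d) (huniq j' hne)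
        · exact h
      have hsum0 : (v j ⬝ᵥ ones) * (v j ⬝ᵥ z) = 0 := by
        have h := aux_dot_expand hA ones z
        rw [hz] at h
        rw [Finset.sum_eq_single_of_mem j (Finset.mem_univ j)
          (fun j' _ hne => by rw [hez j' hne, zero_mul])] at h
        exact h.symm
      have hn2 : (v j ⬝ᵥ ones) * (v j ⬝ᵥ ones) = (n : ℝ) := by
        have h := aux_dot_expand hA ones ones
        have hoo : ones ⬝ᵥ ones = (n : ℝ) := by
          simp [dotProduct, hones]
        rw [hoo, Finset.sum_eq_single_of_mem j (Finset.mem_univ j)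
          (fun j' _ hne => by rw [hez j' hne, zero_mul])] at h
        exact h.symm
      have hej : v j ⬝ᵥ ones ≠ 0 := by
        intro h
        rw [h, mul_zero] at hn2
        exact absurd hn2.symm (by positivity)
      have hyj : v j ⬝ᵥ z = 0 := by
        rcases mul_eq_zero.mp hsum0 with h | h
        · exact absurd h hej
        · exact h
      rw [hyj]
      simp
  calc lam * (z ⬝ᵥ z) = ∑ j, lam * ((v j ⬝ᵥ z) * (v j ⬝ᵥ z)) := by
        rw [aux_dot_expand hA z z, Finset.mul_sum]
    _ ≤ ∑ j, p.eval (μ j) * (v j ⬝ᵥ z) ^ 2 := Finset.sum_le_sum fun j _ => hkey j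
    _ = z ⬝ᵥ ((Polynomial.aeval A p) *ᵥ z) := (aux_quad hA p z).symm


theorem stmt_2 {n k δ : ℕ} (hn : 0 < n) (G : SimpleGraph (Fin n))
    (hconn : G.Connected) (hreg : G.IsRegularOfDegree δ)
    (hA : (G.adjMatrix ℝ).IsHermitian)
    (eig : Fin n → ℝ) (hmono : Antitone eig)
    (hperm : ∃ σ : Equiv.Perm (Fin n), eig = hA.eigenvalues ∘ σ)
    (heig0 : eig ⟨0, hn⟩ = δ)
    (p : Polynomial ℝ) (hp : p.natDegree ≤ k)
    (W lam : ℝ)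
    (hW : IsGreatest {x : ℝ | ∃ u : Fin n, x = (Polynomial.aeval (G.adjMatrix ℝ) p) u u} W)
    (hlam : IsLeast {x : ℝ | ∃ i : Fin n, (i : ℕ) ≠ 0 ∧ x = p.eval (eig i)} lam)
    (hgt : lam < p.eval (eig ⟨0, hn⟩)) :
    (kIndepNum G k : ℝ) ≤ n * (W - lam) / (p.eval (eig ⟨0, hn⟩) - lam) := by
  classical
  set A : Matrix (Fin n) (Fin n) ℝ := G.adjMatrix ℝ with hAdef
  set M : Matrix (Fin n) (Fin n) ℝ := Polynomial.aeval A p with hMdef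
  set ones : Fin n → ℝ := fun _ => (1:ℝ) with honesdef
  set pδ : ℝ := p.eval (eig ⟨0, hn⟩) with hpδdef
  -- the set defining kIndepNum
  set S : Set ℕ := {m | ∃ s : Finset (Fin n),
    (∀ u ∈ s, ∀ v ∈ s, u ≠ v → ∀ w : G.Walk u v, k < w.length) ∧ s.card = m} with hSdef
  have hbdd : BddAbove S := by
    refine ⟨n, fun m hm => ?_⟩
    obtain ⟨s, _, rfl⟩ := hm
    simpa using Finset.card_le_univ s
  have hSne : S.Nonempty := ⟨0, ∅, by simp, rfl⟩
  have hmem : kIndepNum G k ∈ S := Nat.sSup_mem hSne hbdd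
  obtain ⟨s, hs, hcard⟩ := hmem
  set m : ℕ := kIndepNum G k with hmdef
  have hm1 : 1 ≤ m := by
    have h1 : (1 : ℕ) ∈ S := by
      refine ⟨{⟨0, hn⟩}, ?_, Finset.card_singleton _⟩
      intro u hu v hv huv
      simp only [Finset.mem_singleton] at hu hv
      exact absurd (hu.trans hv.symm) huv
    exact le_csSup hbdd h1
  have hm1' : (1:ℝ) ≤ (m:ℝ) := by exact_mod_cast hm1
  have hn' : (0:ℝ) < (n:ℝ) := by exact_mod_cast hn
  -- eigenvector of all ones
  have hA1 : A *ᵥ ones = (δ:ℝ) • ones := by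
    ext u
    simp only [hAdef, SimpleGraph.adjMatrix_mulVec_apply, honesdef, Pi.smul_apply,
      smul_eq_mul, mul_one]
    rw [Finset.sum_const, ← SimpleGraph.degree, hreg u]
    simp
  have hMones : M *ᵥ ones = pδ • ones := by
    rw [hMdef, aux_aeval_mulVec A ones ((δ:ℕ):ℝ) hA1 p, hpδdef, heig0]
  have hMT : Mᵀ = M := aux_aeval_transpose A (G.isSymm_adjMatrix) p
  have honesM : ∀ x : Fin n → ℝ, ones ⬝ᵥ (M *ᵥ x) = pδ * (ones ⬝ᵥ x) := by
    intro x
    rw [Matrix.dotProduct_mulVec, ← Matrix.mulVec_transpose, hMT, hMones,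
      smul_dotProduct, smul_eq_mul]
  -- diagonal bound and off-diagonal vanishing
  have hdiag : ∀ u : Fin n, M u u ≤ W := fun u => hW.2 ⟨u, rfl⟩
  have hoff : ∀ u ∈ s, ∀ v ∈ s, u ≠ v → M u v = 0 := by
    intro u hu v hv huv
    rw [hMdef, Polynomial.aeval_eq_sum_range]
    rw [Matrix.sum_apply]
    refine Finset.sum_eq_zero fun i hi => ?_
    have hik : i ≤ k := by
      have := Finset.mem_range.mp hi
      omega
    have hzero : (A ^ i) u v = 0 := by
      rw [hAdef, SimpleGraph.adjMatrix_pow_apply_eq_card_walk]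
      haveI : IsEmpty {w : G.Walk u v | w.length = i} := by
        refine ⟨fun w => ?_⟩
        obtain ⟨w, hw⟩ := w
        have := hs u hu v hv huv w
        simp only [Set.mem_setOf_eq] at hw
        omega
      rw [Fintype.card_eq_zero]
      simp
    rw [Matrix.smul_apply, hzero, smul_zero]
  -- the indicator vector
  set χ : Fin n → ℝ := fun u => if u ∈ s then (1:ℝ) else 0 with hχdef
  have hχones : ones ⬝ᵥ χ = (m:ℝ) := by
    simp only [dotProduct, honesdef, hχdef, one_mul]
    rw [Finset.sum_ite_mem, Finset.univ_inter, Finset.sum_const, hcard]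
    simp
  have hχχ : χ ⬝ᵥ χ = (m:ℝ) := by
    simp only [dotProduct, hχdef, ite_mul, one_mul, zero_mul]
    rw [Finset.sum_ite_mem, Finset.univ_inter]
    rw [Finset.sum_congr rfl fun u hu => if_pos hu, Finset.sum_const, hcard]
    simp
  have hχMχ : χ ⬝ᵥ (M *ᵥ χ) ≤ (m:ℝ) * W := by
    have hexp : χ ⬝ᵥ (M *ᵥ χ) = ∑ u ∈ s, ∑ v ∈ s, M u v := by
      simp only [dotProduct, Matrix.mulVec, hχdef, ite_mul, one_mul, zero_mul,
        mul_ite, mul_one, mul_zero]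
      rw [Finset.sum_ite_mem, Finset.univ_inter]
      refine Finset.sum_congr rfl fun u hu => ?_
      rw [Finset.sum_ite_mem, Finset.univ_inter]
    have hinner : ∀ u ∈ s, ∑ v ∈ s, M u v = M u u := by
      intro u hu
      exact Finset.sum_eq_single_of_mem u hu fun v hv hvu => hoff u hu v hv (Ne.symm hvu)
    rw [hexp, Finset.sum_congr rfl hinner]
    calc ∑ u ∈ s, M u u ≤ ∑ u ∈ s, W := Finset.sum_le_sum fun u _ => hdiag u
      _ = (m:ℝ) * W := by rw [Finset.sum_const, hcard]; simp [nsmul_eq_mul]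
  -- decomposition
  set c : ℝ := (m:ℝ) / (n:ℝ) with hcdef
  have hcn : c * (n:ℝ) = (m:ℝ) := div_mul_cancel₀ _ (ne_of_gt hn')
  have hc0 : 0 ≤ c := by positivity
  set z : Fin n → ℝ := χ - c • ones with hzdef
  have honesones : ones ⬝ᵥ ones = (n:ℝ) := by
    simp [dotProduct, honesdef]
  have honesχ : χ ⬝ᵥ ones = (m:ℝ) := by rw [dotProduct_comm]; exact hχones
  have hz0 : ones ⬝ᵥ z = 0 := by
    rw [hzdef, dotProduct_sub, dotProduct_smul, hχones, honesones,
      smul_eq_mul, hcn, sub_self]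
  have hz0' : z ⬝ᵥ ones = 0 := by rw [dotProduct_comm]; exact hz0
  have hzz : z ⬝ᵥ z = (m:ℝ) - c * (m:ℝ) := by
    have hexp0 : z ⬝ᵥ z = χ ⬝ᵥ χ - c * (ones ⬝ᵥ χ) - c * (χ ⬝ᵥ ones)
        + c * (c * (ones ⬝ᵥ ones)) := by
      rw [hzdef]
      simp only [dotProduct_sub, sub_dotProduct, smul_dotProduct,
        dotProduct_smul, smul_eq_mul]
      ring
    rw [hexp0, hχχ, hχones, honesχ, honesones, hcn]
    ring
  -- spectral bound
  have hlam' : ∀ i : Fin n, (i : ℕ) ≠ 0 → lam ≤ p.eval (eig i) :=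
    fun i hi => hlam.2 ⟨i, hi, rfl⟩
  have hspec : lam * (z ⬝ᵥ z) ≤ z ⬝ᵥ (M *ᵥ z) := by
    rw [hMdef]
    exact aux_spec hn hA ((δ:ℕ):ℝ) hA1 eig hperm heig0 p lam hlam' z hz0
  -- expansion of the quadratic form
  have hχz : χ = z + c • ones := by rw [hzdef]; ring_nf
  have hexp2 : χ ⬝ᵥ (M *ᵥ χ) = z ⬝ᵥ (M *ᵥ z) + c * (pδ * (c * (n:ℝ))) := by
    have h2 : ones ⬝ᵥ (M *ᵥ z) = 0 := by rw [honesM z, hz0, mul_zero]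
    conv_lhs => rw [hχz]
    rw [Matrix.mulVec_add, Matrix.mulVec_smul, hMones]
    simp only [add_dotProduct, dotProduct_add, smul_dotProduct,
      dotProduct_smul, smul_eq_mul, hz0', h2, honesones]
    ring
  -- main inequality
  have hmain : lam * ((m:ℝ) - c * (m:ℝ)) + c * (pδ * (m:ℝ)) ≤ (m:ℝ) * W := by
    have := hspec
    rw [hzz] at this
    have h3 := hexp2
    rw [hcn] at h3
    linarith [hχMχ, h3, this]
  have hkey : c * (m:ℝ) * (pδ - lam) ≤ (m:ℝ) * (W - lam) := by nlinarith [hmain]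
  have hgt' : (0:ℝ) < pδ - lam := by rw [hpδdef]; linarith
  have hfinal : (m:ℝ) * (pδ - lam) ≤ (n:ℝ) * (W - lam) := by
    have h1 : (n:ℝ) * (c * (m:ℝ) * (pδ - lam)) ≤ (n:ℝ) * ((m:ℝ) * (W - lam)) :=
      mul_le_mul_of_nonneg_left hkey (le_of_lt hn')
    have h2 : (n:ℝ) * (c * (m:ℝ) * (pδ - lam)) = (m:ℝ) * (m:ℝ) * (pδ - lam) := by
      rw [← hcn]; ring
    have h3 : (m:ℝ) * (pδ - lam) * (m:ℝ) ≤ (n:ℝ) * (W - lam) * (m:ℝ) := by nlinarith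
    exact le_of_mul_le_mul_right h3 (by linarith)
  rw [le_div_iff₀ hgt']
  exact hfinal
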